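/- arXiv:1706.09803 — 2 statements merged into one kernel-verified Lean document; each statement's English description precedes it below -/
import Mathlib

section
/- For every real number x ≥ 2, the prime counting function satisfies π(x) ≤ ⌈( ((x−1)/2)·log 2 + θ(x) ) / log x ⌉, where ⌈·⌉ denotes the ceiling function. -/
/-!
Let `S(n) = (n - 1)/2 · log 2 + θ(n) - (π(n) - 1) · log (n + 1)` (`primeCountingSlack n`).
Since `x < ⌊x⌋ + 1`, `S(⌊x⌋) > 0` gives `(π(x) - 1) log x < (x - 1)/2 · log 2 + θ(x)`.
Passing from `n` to `n + 1` adds `(log 2)/2` to `S` and costs at most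
`π(n) · log ((n + 2)/(n + 1)) ≤ π(n)/(n + 1)`, so `S` is nondecreasing once
`2 π(n) ≤ (n + 1) log 2`, which the sieve modulo `30` gives for `n ≥ 121`. For `2 ≤ n ≤ 121`,
`S(n) > 0` is the integer inequality `(n + 1)^(2(π(n) - 1)) < 2^(n - 1) (n#)^2`, checked by
evaluation.
-/

/-- The prime counting function `π(x)`: the number of primes `p ≤ x`. -/
noncomputable def primePi (x : ℝ) : ℕ :=
  (Finset.filter Nat.Prime (Finset.range (⌊x⌋₊ + 1))).card

/-- Chebyshev's first function `θ(x) := ∑_{p ≤ x} log p`. -/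
noncomputable def chebyshevTheta (x : ℝ) : ℝ :=
  ∑ p ∈ Finset.filter Nat.Prime (Finset.range (⌊x⌋₊ + 1)), Real.log p

open Finset Chebyshev
open scoped Nat.Prime

lemma primePi_eq_primeCounting (x : ℝ) : primePi x = π ⌊x⌋₊ :=
  Nat.primesLE_card_eq_primeCounting _

lemma chebyshevTheta_eq_theta (x : ℝ) : chebyshevTheta x = θ x :=
  (theta_eq_sum_primesLE x).symm

lemma one_le_primeCounting {n : ℕ} (hn : 2 ≤ n) : 1 ≤ π n :=
  Nat.monotone_primeCounting hn

lemma primeCounting_le_four_mul_div_fifteen {n : ℕ} (hn : 30 ≤ n) :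
    (π n : ℝ) ≤ 4 * n / 15 + 10 := by
  obtain ⟨m, rfl⟩ : ∃ m, n = 30 + m := ⟨n - 30, by omega⟩
  have hsieve := Nat.primeCounting_add_le (a := 30) (k := 30) (by norm_num) le_rfl m
  rw [show π 30 = 10 by decide, show Nat.totient 30 = 8 by decide] at hsieve
  have hsieve' : (π (30 + m) : ℝ) ≤ 10 + 8 * ((m / 30 : ℕ) + 1) := by exact_mod_cast hsieve
  have hdiv : ((m / 30 : ℕ) : ℝ) ≤ m / 30 := Nat.cast_div_le
  push_cast
  linarith

lemma two_mul_primeCounting_le {n : ℕ} (hn : 121 ≤ n) :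
    2 * (π n : ℝ) ≤ (n + 1) * Real.log 2 := by
  have hn' : (121 : ℝ) ≤ n := by exact_mod_cast hn
  have hlog2 := Real.log_two_gt_d9
  nlinarith [primeCounting_le_four_mul_div_fifteen (by omega : 30 ≤ n)]

noncomputable def primeCountingSlack (n : ℕ) : ℝ :=
  (n - 1) / 2 * Real.log 2 + θ n - (π n - 1) * Real.log (n + 1)

lemma primeCountingSlack_add_le_succ (n : ℕ) :
    primeCountingSlack n + (Real.log 2 / 2 - π n * Real.log ((n + 2) / (n + 1))) ≤
      primeCountingSlack (n + 1) := by
  have hlog : Real.log ((n + 2) / (n + 1)) = Real.log (n + 2) - Real.log (n + 1) :=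
    Real.log_div (by positivity) (by positivity)
  have hmono : Real.log (n + 1) ≤ Real.log (n + 2) :=
    Real.log_le_log (by positivity) (by linarith)
  unfold primeCountingSlack
  rw [hlog, theta_eq_sum_primesLE_log, theta_eq_sum_primesLE_log,
    ← Nat.primesLE_card_eq_primeCounting, ← Nat.primesLE_card_eq_primeCounting,
    Nat.primesLE_succ]
  push_cast
  rw [show (n : ℝ) + 1 + 1 = n + 2 by ring]
  split_ifs
  · rw [sum_insert (Nat.notMem_primesLE n), card_insert_of_notMem (Nat.notMem_primesLE n)]
    push_cast
    linarith
  · linarith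

lemma primeCountingSlack_le_succ {n : ℕ} (hn : 121 ≤ n) :
    primeCountingSlack n ≤ primeCountingSlack (n + 1) := by
  have hpos : (0 : ℝ) < n + 1 := by positivity
  have hstep : Real.log ((n + 2) / (n + 1)) ≤ 1 / (n + 1) := by
    have := Real.log_le_sub_one_of_pos (x := ((n : ℝ) + 2) / (n + 1)) (by positivity)
    rwa [div_sub_one hpos.ne', show (n : ℝ) + 2 - (n + 1) = 1 by ring] at this
  have hcost : π n * Real.log ((n + 2) / (n + 1)) ≤ Real.log 2 / 2 := calc
    π n * Real.log ((n + 2) / (n + 1)) ≤ π n * (1 / (n + 1)) := by gcongr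
    _ ≤ Real.log 2 / 2 := by
      rw [mul_one_div, div_le_iff₀ hpos]
      linarith [two_mul_primeCounting_le hn]
  linarith [primeCountingSlack_add_le_succ n]

lemma primeCountingSlack_pos_of_lt {n : ℕ} (hn : 2 ≤ n)
    (h : (n + 1) ^ (2 * (π n - 1)) < 2 ^ (n - 1) * primorial n ^ 2) :
    0 < primeCountingSlack n := by
  have hlt : ((n : ℝ) + 1) ^ (2 * (π n - 1)) < 2 ^ (n - 1) * (primorial n : ℝ) ^ 2 := by
    exact_mod_cast h
  have hlog := Real.log_lt_log (by positivity) hlt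
  rw [Real.log_mul (by positivity) (by simp [primorial_ne_zero]), Real.log_pow, Real.log_pow,
    Real.log_pow, ← Nat.floor_natCast (R := ℝ) n, ← theta_eq_log_primorial, Nat.floor_natCast,
    Nat.cast_sub (by omega), Nat.cast_mul, Nat.cast_sub (one_le_primeCounting hn)] at hlog
  unfold primeCountingSlack
  push_cast at hlog
  linarith

set_option maxRecDepth 1000 in
lemma succ_pow_lt_two_pow_mul_primorial_sq :
    ∀ n < 122, 2 ≤ n → (n + 1) ^ (2 * (π n - 1)) < 2 ^ (n - 1) * primorial n ^ 2 := by
  decide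

lemma primeCountingSlack_pos {n : ℕ} (hn : 2 ≤ n) : 0 < primeCountingSlack n := by
  have hsmall (k : ℕ) (hk2 : 2 ≤ k) (hk : k ≤ 121) : 0 < primeCountingSlack k :=
    primeCountingSlack_pos_of_lt hk2 (succ_pow_lt_two_pow_mul_primorial_sq k (by omega) hk2)
  rcases le_or_gt n 121 with hle | hgt
  · exact hsmall n hn hle
  · exact Nat.le_induction (hsmall 121 (by norm_num) le_rfl)
      (fun k hk ih => ih.trans_le (primeCountingSlack_le_succ hk)) n hgt.le

theorem prime_counting_upper_bound (x : ℝ) (hx : 2 ≤ x) :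
    (primePi x : ℝ) ≤
      ⌈(((x - 1) / 2) * Real.log 2 + chebyshevTheta x) / Real.log x⌉ := by
  rw [primePi_eq_primeCounting, chebyshevTheta_eq_theta, theta_eq_theta_coe_floor]
  set n := ⌊x⌋₊
  have hn : 2 ≤ n := Nat.le_floor (by exact_mod_cast hx)
  have hlogx : 0 < Real.log x := Real.log_pos (by linarith)
  have hπ : (1 : ℝ) ≤ π n := by exact_mod_cast one_le_primeCounting hn
  have hslack := primeCountingSlack_pos hn
  unfold primeCountingSlack at hslack
  have hkey : ((π n : ℝ) - 1) * Real.log x < (x - 1) / 2 * Real.log 2 + θ n := calc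
    ((π n : ℝ) - 1) * Real.log x ≤ (π n - 1) * Real.log (n + 1) := by
      gcongr
      exact (Nat.lt_floor_add_one x).le
    _ < (n - 1) / 2 * Real.log 2 + θ n := by linarith
    _ ≤ (x - 1) / 2 * Real.log 2 + θ n := by
      gcongr
      exact Nat.floor_le (by linarith)
  exact_mod_cast Int.le_ceil_iff.mpr (by push_cast; rwa [lt_div_iff₀ hlogx])
end

section
/- For every real number x ≥ 3, the prime counting function satisfies π(x) ≤ ((log 2)/2)·x + 2. -/
lemma coprime6_count_aux (m r : ℕ) (hr : r < 6) :
    3 * ((Finset.Ico 5 (6*m + r + 6)).filter (Nat.Coprime 6)).card ≤ 6*m + r + 5 := by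
  induction m with
  | zero => interval_cases r <;> decide
  | succ m ih =>
      have heq : 6*(m+1) + r + 6 = 6*m + r + 6 + 6 := by ring
      have h1 : Finset.Ico 5 (6*(m+1) + r + 6)
          = Finset.Ico 5 (6*m + r + 6) ∪ Finset.Ico (6*m + r + 6) (6*m + r + 6 + 6) := by
        rw [heq, Finset.Ico_union_Ico_eq_Ico (by omega) (by omega)]
      have h2 := Nat.filter_coprime_Ico_eq_totient 6 (6*m + r + 6)
      have h3 : Nat.totient 6 = 2 := by decide
      rw [h1, Finset.filter_union]
      have h4 := Finset.card_union_le
        ((Finset.Ico 5 (6*m + r + 6)).filter (Nat.Coprime 6))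
        ((Finset.Ico (6*m + r + 6) (6*m + r + 6 + 6)).filter (Nat.Coprime 6))
      have h5 : ((Finset.Ico (6*m + r + 6) (6*m + r + 6 + 6)).filter (Nat.Coprime 6)).card = 2 := by
        rw [← h3, ← h2]
      omega

lemma primes_subset (n : ℕ) :
    (Finset.range (n+1)).filter Nat.Prime
      ⊆ insert 2 (insert 3 ((Finset.Ico 5 (n+1)).filter (Nat.Coprime 6))) := by
  intro p hp
  simp only [Finset.mem_filter, Finset.mem_range, Finset.mem_insert, Finset.mem_Ico] at *
  obtain ⟨hlt, hprime⟩ := hp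
  by_cases h2 : p = 2
  · exact Or.inl h2
  by_cases h3 : p = 3
  · exact Or.inr (Or.inl h3)
  have h4 : p ≠ 4 := by rintro rfl; exact (by decide : ¬ Nat.Prime 4) hprime
  have h5 : 5 ≤ p := by have := hprime.two_le; omega
  refine Or.inr (Or.inr ⟨⟨h5, hlt⟩, ?_⟩)
  have : ¬ p ∣ 6 := by
    intro hd
    have h6 := Nat.le_of_dvd (by norm_num) hd
    interval_cases p
    · exact absurd hd (by decide)
    · exact absurd hprime (by decide)
  exact (hprime.coprime_iff_not_dvd.mpr this).symm

theorem prime_counting_linear_bound (x : ℝ) (hx : 3 ≤ x) :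
    (primePi x : ℝ) ≤ (Real.log 2 / 2) * x + 2 := by
  have hx0 : (0:ℝ) ≤ x := by linarith
  have hlog : (2:ℝ)/3 ≤ Real.log 2 := by
    have := Real.log_two_gt_d9
    linarith
  have hfloor : (⌊x⌋₊ : ℝ) ≤ x := Nat.floor_le hx0
  set n := ⌊x⌋₊ with hn
  have hn3 : 3 ≤ n := Nat.le_floor (by exact_mod_cast hx)
  -- key: primePi x ≤ 2 + c where 3 * c ≤ n (for n ≥ 5), or primePi x ≤ 2 for n < 5
  have hthird : x / 3 ≤ Real.log 2 / 2 * x := by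
    nlinarith
  rcases lt_or_ge n 5 with h5 | h5
  · have : primePi x ≤ 2 := by
      unfold primePi
      rw [← hn]
      interval_cases n <;> decide
    have : (primePi x : ℝ) ≤ 2 := by exact_mod_cast this
    nlinarith [Real.log_pos (by norm_num : (1:ℝ) < 2)]
  · -- n ≥ 5
    obtain ⟨m, r, hr, hmr⟩ : ∃ m r, r < 6 ∧ n = 6*m + r + 5 :=
      ⟨(n-5)/6, (n-5)%6, Nat.mod_lt _ (by norm_num), by omega⟩
    have hkey := coprime6_count_aux m r hr
    have hsub := primes_subset n
    have hcard : primePi x ≤ 2 + ((Finset.Ico 5 (n+1)).filter (Nat.Coprime 6)).card := by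
      unfold primePi
      rw [← hn]
      calc ((Finset.range (n+1)).filter Nat.Prime).card
          ≤ (insert 2 (insert 3 ((Finset.Ico 5 (n+1)).filter (Nat.Coprime 6)))).card :=
            Finset.card_le_card hsub
        _ ≤ 2 + ((Finset.Ico 5 (n+1)).filter (Nat.Coprime 6)).card := by
            have h1 := Finset.card_insert_le 2 (insert 3 ((Finset.Ico 5 (n+1)).filter (Nat.Coprime 6)))
            have h2 := Finset.card_insert_le 3 ((Finset.Ico 5 (n+1)).filter (Nat.Coprime 6))
            omega
    have hkey' : 3 * ((Finset.Ico 5 (n+1)).filter (Nat.Coprime 6)).card ≤ n := by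
      have : n + 1 = 6*m + r + 6 := by omega
      rw [this]
      omega
    have h1 : 3 * (primePi x) ≤ n + 6 := by omega
    have h2 : (3:ℝ) * primePi x ≤ (n:ℝ) + 6 := by exact_mod_cast h1
    have h3 : (n:ℝ) ≤ x := hfloor
    have : (primePi x : ℝ) ≤ x/3 + 2 := by linarith
    linarith
end
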